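/- arXiv:1712.02027 — 2 statements merged into one kernel-verified Lean document; each statement's English description precedes it below -/
import Mathlib

section
/- (Lemma 1, part 2) Stability criterion at the interior rest point: assume a ≠ b, let x̂ := (a − b)/(Np(ω₁ − ω₂)²) − ω₂/(ω₁ − ω₂), assume 0 < x̂ < 1, and set c := a − b + Npω₂(ω₂ − ω₁). If c·(a(ω₁ + ω₂) + ω₁(−2b + Npω₁(ω₂ − ω₁)))/(a − b) < 0 and p·c·(aω₂ − bω₁)·(a − b + Npω₁(ω₂ − ω₁))/(ω₁ − ω₂) > 0, then the Jacobian J evaluated at (x̂, 1 − x̂) satisfies J₁₁ < 0 and det J > 0. -/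
/-! At an interior rest point `(u, v)`, `u + v = 1`, both pools earn the same payoff `ρ`, and the
product rule collapses the Jacobian of the replicator field to
`J = [[u (v D₁ - ρ), u (v D₂ - ρ)], [-v (u D₁ + ρ), -v (u D₂ + ρ)]]`, where `Dⱼ = ∂ⱼ (y₁ - y₂)`;
hence `det J = u v ρ (D₂ - D₁)`. For the pool payoffs, equal payoffs pin the common denominator
to `N (ω₁ u + ω₂ v) = (a - b) / (p (ω₁ - ω₂))`, and substituting it turns `J₁₁` and `det J` into
the two expressions of the hypotheses divided by `N (ω₁ - ω₂)²` and `N (a - b)²` respectively. -/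

def meanPayoff (y₁ y₂ : ℝ → ℝ → ℝ) (x₁ x₂ : ℝ) : ℝ :=
  x₁ * y₁ x₁ x₂ + x₂ * y₂ x₁ x₂

def replicator₁ (y₁ y₂ : ℝ → ℝ → ℝ) (x₁ x₂ : ℝ) : ℝ :=
  x₁ * (y₁ x₁ x₂ - meanPayoff y₁ y₂ x₁ x₂)

def replicator₂ (y₁ y₂ : ℝ → ℝ → ℝ) (x₁ x₂ : ℝ) : ℝ :=
  x₂ * (y₂ x₁ x₂ - meanPayoff y₁ y₂ x₁ x₂)

section RestPointJacobian

variable {y₁ y₂ : ℝ → ℝ → ℝ} {u v ρ d₁ d₂ : ℝ}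

theorem hasDerivAt_replicator₁_fst (hy₁ : HasDerivAt (fun t => y₁ t v) d₁ u)
    (hy₂ : HasDerivAt (fun t => y₂ t v) d₂ u) (h₁ : y₁ u v = ρ) (h₂ : y₂ u v = ρ)
    (huv : u + v = 1) :
    HasDerivAt (fun t => replicator₁ y₁ y₂ t v) (u * (v * (d₁ - d₂) - ρ)) u := by
  refine ((hasDerivAt_id u).mul
    (hy₁.sub (((hasDerivAt_id u).mul hy₁).add (hy₂.const_mul v)))).congr_deriv ?_
  obtain rfl : v = 1 - u := eq_sub_of_add_eq' huv
  simp only [id_eq, Pi.sub_apply, Pi.add_apply, Pi.mul_apply, h₁, h₂]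
  ring

theorem hasDerivAt_replicator₂_fst (hy₁ : HasDerivAt (fun t => y₁ t v) d₁ u)
    (hy₂ : HasDerivAt (fun t => y₂ t v) d₂ u) (h₁ : y₁ u v = ρ) (huv : u + v = 1) :
    HasDerivAt (fun t => replicator₂ y₁ y₂ t v) (-(v * (u * (d₁ - d₂) + ρ))) u := by
  refine ((hy₂.sub (((hasDerivAt_id u).mul hy₁).add (hy₂.const_mul v))).const_mul v).congr_deriv
    ?_
  obtain rfl : v = 1 - u := eq_sub_of_add_eq' huv
  simp only [id_eq, h₁]
  ring

theorem hasDerivAt_replicator₁_snd (hy₁ : HasDerivAt (fun t => y₁ u t) d₁ v)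
    (hy₂ : HasDerivAt (fun t => y₂ u t) d₂ v) (h₂ : y₂ u v = ρ) (huv : u + v = 1) :
    HasDerivAt (fun t => replicator₁ y₁ y₂ u t) (u * (v * (d₁ - d₂) - ρ)) v := by
  refine ((hy₁.sub ((hy₁.const_mul u).add ((hasDerivAt_id v).mul hy₂))).const_mul u).congr_deriv
    ?_
  obtain rfl : v = 1 - u := eq_sub_of_add_eq' huv
  simp only [id_eq, h₂]
  ring

theorem hasDerivAt_replicator₂_snd (hy₁ : HasDerivAt (fun t => y₁ u t) d₁ v)
    (hy₂ : HasDerivAt (fun t => y₂ u t) d₂ v) (h₁ : y₁ u v = ρ) (h₂ : y₂ u v = ρ)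
    (huv : u + v = 1) :
    HasDerivAt (fun t => replicator₂ y₁ y₂ u t) (-(v * (u * (d₁ - d₂) + ρ))) v := by
  refine ((hasDerivAt_id v).mul
    (hy₂.sub ((hy₁.const_mul u).add ((hasDerivAt_id v).mul hy₂)))).congr_deriv ?_
  obtain rfl : v = 1 - u := eq_sub_of_add_eq' huv
  simp only [id_eq, Pi.sub_apply, Pi.add_apply, Pi.mul_apply, h₁, h₂]
  ring

theorem replicator_jacobian_det {D₁ D₂ : ℝ} (huv : u + v = 1) :
    u * (v * D₁ - ρ) * -(v * (u * D₂ + ρ)) - u * (v * D₂ - ρ) * -(v * (u * D₁ + ρ)) =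
      u * v * ρ * (D₂ - D₁) := by
  linear_combination u * v * ρ * (D₂ - D₁) * huv

end RestPointJacobian

theorem hasDerivAt_div_linear_fst (A N ω₁ ω₂ q u v : ℝ) (h : N * (ω₁ * u + ω₂ * v) ≠ 0) :
    HasDerivAt (fun t => A / (N * (ω₁ * t + ω₂ * v)) - q)
      (-(A * N * ω₁) / (N * (ω₁ * u + ω₂ * v)) ^ 2) u := by
  have hw : HasDerivAt (fun t => N * (ω₁ * t + ω₂ * v)) (N * ω₁) u := by
    simpa using (((hasDerivAt_id u).const_mul ω₁).add_const (ω₂ * v)).const_mul N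
  exact (((hasDerivAt_const u A).div hw h).sub_const q).congr_deriv (by ring)

theorem hasDerivAt_div_linear_snd (A N ω₁ ω₂ q u v : ℝ) (h : N * (ω₁ * u + ω₂ * v) ≠ 0) :
    HasDerivAt (fun t => A / (N * (ω₁ * u + ω₂ * t)) - q)
      (-(A * N * ω₂) / (N * (ω₁ * u + ω₂ * v)) ^ 2) v := by
  have hw : HasDerivAt (fun t => N * (ω₁ * u + ω₂ * t)) (N * ω₂) v := by
    simpa using (((hasDerivAt_id v).const_mul ω₂).const_add (ω₁ * u)).const_mul N
  exact (((hasDerivAt_const v A).div hw h).sub_const q).congr_deriv (by ring)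

section PoolRestPoint

variable {N p ω₁ ω₂ a b x K : ℝ}

noncomputable def restPoint (N p ω₁ ω₂ a b : ℝ) : ℝ :=
  (a - b) / (N * p * (ω₁ - ω₂) ^ 2) - ω₂ / (ω₁ - ω₂)

theorem restPoint_denom_eq (hN : N ≠ 0) (hω : ω₁ ≠ ω₂)
    (hx : x = restPoint N p ω₁ ω₂ a b) :
    N * (ω₁ * x + ω₂ * (1 - x)) = (a - b) / (p * (ω₁ - ω₂)) := by
  have hω' : ω₁ - ω₂ ≠ 0 := sub_ne_zero.mpr hω
  rw [hx, restPoint]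
  field_simp
  ring

theorem payoff_eq_of_denom_eq (hω : ω₁ ≠ ω₂) (hab : a ≠ b)
    (hK : K = (a - b) / (p * (ω₁ - ω₂))) :
    b / K - p * ω₂ = a / K - p * ω₁ := by
  have hω' : ω₁ - ω₂ ≠ 0 := sub_ne_zero.mpr hω
  have hab' : a - b ≠ 0 := sub_ne_zero.mpr hab
  rw [hK]
  field_simp
  ring

theorem restPoint_jacobian₁₁ (hN : N ≠ 0) (hp : p ≠ 0) (hω : ω₁ ≠ ω₂) (hab : a ≠ b)
    (hx : x = restPoint N p ω₁ ω₂ a b) (hK : K = (a - b) / (p * (ω₁ - ω₂))) :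
    x * ((1 - x) * (-(a * N * ω₁) / K ^ 2 - -(b * N * ω₁) / K ^ 2) - (a / K - p * ω₁)) =
      (a - b + N * p * ω₂ * (ω₂ - ω₁)) *
          (a * (ω₁ + ω₂) + ω₁ * (-2 * b + N * p * ω₁ * (ω₂ - ω₁))) / (a - b) /
        (N * (ω₁ - ω₂) ^ 2) := by
  have hω' : ω₁ - ω₂ ≠ 0 := sub_ne_zero.mpr hω
  have hab' : a - b ≠ 0 := sub_ne_zero.mpr hab
  rw [hx, hK, restPoint]
  field_simp
  ring

theorem restPoint_jacobian_det (hN : N ≠ 0) (hp : p ≠ 0) (hω : ω₁ ≠ ω₂) (hab : a ≠ b)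
    (hx : x = restPoint N p ω₁ ω₂ a b) (hK : K = (a - b) / (p * (ω₁ - ω₂))) :
    x * (1 - x) * (a / K - p * ω₁) *
        ((-(a * N * ω₂) / K ^ 2 - -(b * N * ω₂) / K ^ 2) -
          (-(a * N * ω₁) / K ^ 2 - -(b * N * ω₁) / K ^ 2)) =
      p * (a - b + N * p * ω₂ * (ω₂ - ω₁)) * (a * ω₂ - b * ω₁) *
          (a - b + N * p * ω₁ * (ω₂ - ω₁)) / (ω₁ - ω₂) / (N * (a - b) ^ 2) := by
  have hω' : ω₁ - ω₂ ≠ 0 := sub_ne_zero.mpr hω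
  have hab' : a - b ≠ 0 := sub_ne_zero.mpr hab
  rw [hx, hK, restPoint]
  field_simp
  ring

end PoolRestPoint

theorem interior_rest_point_stability_criterion_general (N p ω₁ ω₂ a b : ℝ)
    (hN : 0 < N) (hp : 0 < p) (hω : ω₁ ≠ ω₂) (hab : a ≠ b)
    (xstar : ℝ) (hxstar : xstar = (a - b) / (N * p * (ω₁ - ω₂) ^ 2) - ω₂ / (ω₁ - ω₂))
    (c : ℝ) (hc : c = a - b + N * p * ω₂ * (ω₂ - ω₁))
    (h1 : c * (a * (ω₁ + ω₂) + ω₁ * (-2 * b + N * p * ω₁ * (ω₂ - ω₁))) / (a - b) < 0)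
    (h2 : p * c * (a * ω₂ - b * ω₁) * (a - b + N * p * ω₁ * (ω₂ - ω₁)) / (ω₁ - ω₂) > 0) :
    let y₁ : ℝ → ℝ → ℝ := fun x₁ x₂ => a / (N * (ω₁ * x₁ + ω₂ * x₂)) - p * ω₁
    let y₂ : ℝ → ℝ → ℝ := fun x₁ x₂ => b / (N * (ω₁ * x₁ + ω₂ * x₂)) - p * ω₂
    let f₁ : ℝ → ℝ → ℝ := fun x₁ x₂ =>
      x₁ * (y₁ x₁ x₂ - (x₁ * y₁ x₁ x₂ + x₂ * y₂ x₁ x₂))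
    let f₂ : ℝ → ℝ → ℝ := fun x₁ x₂ =>
      x₂ * (y₂ x₁ x₂ - (x₁ * y₁ x₁ x₂ + x₂ * y₂ x₁ x₂))
    let J₁₁ : ℝ := deriv (fun t => f₁ t (1 - xstar)) xstar
    let J₁₂ : ℝ := deriv (fun t => f₁ xstar t) (1 - xstar)
    let J₂₁ : ℝ := deriv (fun t => f₂ t (1 - xstar)) xstar
    let J₂₂ : ℝ := deriv (fun t => f₂ xstar t) (1 - xstar)
    J₁₁ < 0 ∧ J₁₁ * J₂₂ - J₁₂ * J₂₁ > 0 := by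
  intro y₁ y₂ f₁ f₂ J₁₁ J₁₂ J₂₁ J₂₂
  subst hc
  have hK := restPoint_denom_eq hN.ne' hω hxstar
  have hK₀ : N * (ω₁ * xstar + ω₂ * (1 - xstar)) ≠ 0 :=
    hK ▸ div_ne_zero (sub_ne_zero.mpr hab) (mul_ne_zero hp.ne' (sub_ne_zero.mpr hω))
  have hy₁₁ := hasDerivAt_div_linear_fst a N ω₁ ω₂ (p * ω₁) xstar (1 - xstar) hK₀
  have hy₂₁ := hasDerivAt_div_linear_fst b N ω₁ ω₂ (p * ω₂) xstar (1 - xstar) hK₀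
  have hy₁₂ := hasDerivAt_div_linear_snd a N ω₁ ω₂ (p * ω₁) xstar (1 - xstar) hK₀
  have hy₂₂ := hasDerivAt_div_linear_snd b N ω₁ ω₂ (p * ω₂) xstar (1 - xstar) hK₀
  set K := N * (ω₁ * xstar + ω₂ * (1 - xstar))
  have hρ : y₂ xstar (1 - xstar) = y₁ xstar (1 - xstar) := payoff_eq_of_denom_eq hω hab hK
  have huv : xstar + (1 - xstar) = 1 := add_sub_cancel xstar 1
  have hJ₁₁ : J₁₁ = _ :=
    (hasDerivAt_replicator₁_fst (y₁ := y₁) (y₂ := y₂) hy₁₁ hy₂₁ rfl hρ huv).deriv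
  have hJ₁₂ : J₁₂ = _ :=
    (hasDerivAt_replicator₁_snd (y₁ := y₁) (y₂ := y₂) hy₁₂ hy₂₂ hρ huv).deriv
  have hJ₂₁ : J₂₁ = _ :=
    (hasDerivAt_replicator₂_fst (y₁ := y₁) (y₂ := y₂) hy₁₁ hy₂₁ rfl huv).deriv
  have hJ₂₂ : J₂₂ = _ :=
    (hasDerivAt_replicator₂_snd (y₁ := y₁) (y₂ := y₂) hy₁₂ hy₂₂ rfl hρ huv).deriv
  rw [hJ₁₁, hJ₁₂, hJ₂₁, hJ₂₂, replicator_jacobian_det huv]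
  constructor
  · rw [restPoint_jacobian₁₁ hN.ne' hp.ne' hω hab hxstar hK]
    exact div_neg_of_neg_of_pos h1 (by positivity)
  · rw [restPoint_jacobian_det hN.ne' hp.ne' hω hab hxstar hK]
    exact div_pos h2 (by positivity)

/-- (Lemma 1, part 2) Stability criterion at the interior rest point
`(xstar, 1-xstar)` with `xstar = (a-b)/(Np(ω₁-ω₂)²) - ω₂/(ω₁-ω₂)` and
`c = a - b + Npω₂(ω₂-ω₁)`: if
`c(a(ω₁+ω₂) + ω₁(-2b + Npω₁(ω₂-ω₁)))/(a-b) < 0` and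
`p c (aω₂ - bω₁)(a - b + Npω₁(ω₂-ω₁))/(ω₁-ω₂) > 0`, then the Jacobian `J` at
`(xstar, 1-xstar)` satisfies `J₁₁ < 0` and `det J > 0`. -/
theorem interior_rest_point_stability_criterion (N p ω₁ ω₂ a b : ℝ)
    (hN : 0 < N) (hp : 0 < p) (hω₁ : 0 < ω₁) (hω₂ : 0 < ω₂)
    (ha : 0 < a) (hb : 0 < b) (hω : ω₁ ≠ ω₂) (hab : a ≠ b)
    (xstar : ℝ) (hxstar : xstar = (a - b) / (N * p * (ω₁ - ω₂) ^ 2) - ω₂ / (ω₁ - ω₂))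
    (hxstar0 : 0 < xstar) (hxstar1 : xstar < 1)
    (c : ℝ) (hc : c = a - b + N * p * ω₂ * (ω₂ - ω₁))
    (h1 : c * (a * (ω₁ + ω₂) + ω₁ * (-2 * b + N * p * ω₁ * (ω₂ - ω₁))) / (a - b) < 0)
    (h2 : p * c * (a * ω₂ - b * ω₁) * (a - b + N * p * ω₁ * (ω₂ - ω₁)) / (ω₁ - ω₂) > 0) :
    let y₁ : ℝ → ℝ → ℝ := fun x₁ x₂ => a / (N * (ω₁ * x₁ + ω₂ * x₂)) - p * ω₁
    let y₂ : ℝ → ℝ → ℝ := fun x₁ x₂ => b / (N * (ω₁ * x₁ + ω₂ * x₂)) - p * ω₂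
    let f₁ : ℝ → ℝ → ℝ := fun x₁ x₂ =>
      x₁ * (y₁ x₁ x₂ - (x₁ * y₁ x₁ x₂ + x₂ * y₂ x₁ x₂))
    let f₂ : ℝ → ℝ → ℝ := fun x₁ x₂ =>
      x₂ * (y₂ x₁ x₂ - (x₁ * y₁ x₁ x₂ + x₂ * y₂ x₁ x₂))
    let J₁₁ : ℝ := deriv (fun t => f₁ t (1 - xstar)) xstar
    let J₁₂ : ℝ := deriv (fun t => f₁ xstar t) (1 - xstar)
    let J₂₁ : ℝ := deriv (fun t => f₂ t (1 - xstar)) xstar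
    let J₂₂ : ℝ := deriv (fun t => f₂ xstar t) (1 - xstar)
    J₁₁ < 0 ∧ J₁₁ * J₂₂ - J₁₂ * J₂₁ > 0 :=
  interior_rest_point_stability_criterion_general N p ω₁ ω₂ a b hN hp hω hab xstar hxstar c hc h1 h2
end

section
/- (Theorem 2, instability of the boundary rest point (1,0)) With a, b, p, ω₁, ω₂ fixed positive reals and ω₁ ≠ ω₂, there exists N₀ > 0 such that for all N ≥ N₀ the stability criterion fails at the rest point (1,0): it is not the case that both D₁'(N) := (b − a)/(Nω₁) − p(ω₂ − ω₁) < 0 and D'(N) := ((b − a)/(Nω₁) − p(ω₂ − ω₁))·(pω₁ − a/(Nω₁)) > 0 (these being the leading principal minor and determinant of the Jacobian of the replicator dynamics at (1,0), obtained from the (0,1) case by swapping the roles of (a, ω₁) and (b, ω₂)). -/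
/-!
Near `(1,0)` the two criteria share the factor `D₁'(N)`, and the other factor of `D'(N)`,
`p ω₁ - a / (N ω₁)`, tends to `p ω₁ > 0` as `N → ∞`. Once it is positive, `D'(N)` has the
sign of `D₁'(N)`, so `D₁'(N) < 0` and `D'(N) > 0` cannot hold together.
-/

open Filter Topology

lemma tendsto_sub_div_mul_atTop (c a ω : ℝ) :
    Tendsto (fun N : ℝ => c - a / (N * ω)) atTop (𝓝 c) := by
  have h : Tendsto (fun N : ℝ => a / N / ω) atTop (𝓝 (0 / ω)) :=
    (tendsto_const_nhds.div_atTop tendsto_id).div_const ω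
  simpa only [div_mul_eq_div_div, zero_div, sub_zero] using tendsto_const_nhds.sub h

lemma exists_pos_forall_ge_of_eventually_atTop {P : ℝ → Prop} (h : ∀ᶠ N in atTop, P N) :
    ∃ N₀ : ℝ, 0 < N₀ ∧ ∀ N, N₀ ≤ N → P N := by
  obtain ⟨N₁, hN₁⟩ := eventually_atTop.mp h
  exact ⟨max N₁ 1, by positivity, fun N hN => hN₁ N (le_of_max_le_left hN)⟩

theorem boundary_rest_point_10_unstable_large_population_general (p ω₁ ω₂ a b : ℝ)
    (hp : 0 < p) (hω₁ : 0 < ω₁) :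
    ∃ N₀ : ℝ, 0 < N₀ ∧ ∀ N : ℝ, N₀ ≤ N →
      ¬((b - a) / (N * ω₁) - p * (ω₂ - ω₁) < 0 ∧
        ((b - a) / (N * ω₁) - p * (ω₂ - ω₁)) * (p * ω₁ - a / (N * ω₁)) > 0) := by
  have hfactor : ∀ᶠ N in atTop, 0 < p * ω₁ - a / (N * ω₁) :=
    (tendsto_sub_div_mul_atTop _ a ω₁).eventually (lt_mem_nhds (by positivity))
  obtain ⟨N₀, hN₀, hpos⟩ := exists_pos_forall_ge_of_eventually_atTop hfactor
  exact ⟨N₀, hN₀, fun N hN ⟨hD₁, hD⟩ => (mul_neg_of_neg_of_pos hD₁ (hpos N hN)).not_gt hD⟩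

/-- (Theorem 2, instability of the boundary rest point `(1,0)`) For all sufficiently
large population sizes `N`, the stability criterion fails at `(1,0)`: it is not the
case that both `D₁'(N) = (b-a)/(Nω₁) - p(ω₂-ω₁) < 0` and
`D'(N) = ((b-a)/(Nω₁) - p(ω₂-ω₁))(pω₁ - a/(Nω₁)) > 0`. -/
theorem boundary_rest_point_10_unstable_large_population (p ω₁ ω₂ a b : ℝ)
    (hp : 0 < p) (hω₁ : 0 < ω₁) (hω₂ : 0 < ω₂)
    (ha : 0 < a) (hb : 0 < b) (hω : ω₁ ≠ ω₂) :
    ∃ N₀ : ℝ, 0 < N₀ ∧ ∀ N : ℝ, N₀ ≤ N →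
      ¬((b - a) / (N * ω₁) - p * (ω₂ - ω₁) < 0 ∧
        ((b - a) / (N * ω₁) - p * (ω₂ - ω₁)) * (p * ω₁ - a / (N * ω₁)) > 0) :=
  boundary_rest_point_10_unstable_large_population_general p ω₁ ω₂ a b hp hω₁
end
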